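/- For real numbers a, b with a ≥ |b| > 0, ∫₀^π log(a + b cos x) dx = π log((a + √(a² - b²))/2). -/

import Mathlib

open Real
open MeasureTheory intervalIntegral Set

-- log is interval integrable on [0, c]
lemma logII (c : ℝ) (hc : 0 < c) : IntervalIntegrable Real.log volume 0 c := by
  have h1 : IntervalIntegrable Real.log volume 0 1 := by
    have hcont : ContinuousOn (fun x : ℝ => x - x * Real.log x) (Set.uIcc 0 1) :=
      (continuous_id.sub Real.continuous_mul_log).continuousOn
    have hderiv : ∀ x ∈ Ioo (min (0:ℝ) 1) (max 0 1),
        HasDerivAt (fun x : ℝ => x - x * Real.log x) (-Real.log x) x := by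
      intro x hx
      rw [min_eq_left zero_le_one, max_eq_right zero_le_one] at hx
      have h := (hasDerivAt_id x).sub (Real.hasDerivAt_mul_log (ne_of_gt hx.1))
      have e : (1 : ℝ) - (Real.log x + 1) = -Real.log x := by ring
      rw [e] at h
      exact h
    have hpos : ∀ x ∈ Ioo (min (0:ℝ) 1) (max 0 1), 0 ≤ -Real.log x := by
      intro x hx
      rw [min_eq_left zero_le_one, max_eq_right zero_le_one] at hx
      simpa using Real.log_nonpos (le_of_lt hx.1) (le_of_lt hx.2)
    have hint := intervalIntegral.intervalIntegrable_deriv_of_nonneg hcont hderiv hpos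
    have h2 := hint.neg
    have e : (-fun x : ℝ => -Real.log x) = Real.log := by funext x; simp
    rwa [e] at h2
  rcases le_or_gt c 1 with h | h
  · exact h1.mono_set (by rw [uIcc_of_le hc.le, uIcc_of_le zero_le_one]; exact Icc_subset_Icc le_rfl h)
  · exact h1.trans (intervalIntegrable_log (by rw [uIcc_of_le h.le]; simp))

lemma quad_lb (t x : ℝ) : (1 - |t|)^2 ≤ 1 + 2*t*Real.cos x + t^2 := by
  have h1 : |t * Real.cos x| ≤ |t| := by
    rw [abs_mul]; exact mul_le_of_le_one_right (abs_nonneg t) (Real.abs_cos_le_one x)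
  have h2 := neg_abs_le (t * Real.cos x)
  have h3 : |t|^2 = t^2 := sq_abs t
  nlinarith

lemma quad_ub (t x : ℝ) : 1 + 2*t*Real.cos x + t^2 ≤ (1 + |t|)^2 := by
  have h1 : |t * Real.cos x| ≤ |t| := by
    rw [abs_mul]; exact mul_le_of_le_one_right (abs_nonneg t) (Real.abs_cos_le_one x)
  have h2 := le_abs_self (t * Real.cos x)
  have h3 : |t|^2 = t^2 := sq_abs t
  nlinarith

lemma quad_pos (t x : ℝ) (hx : Real.sin x ≠ 0) : 0 < 1 + 2*t*Real.cos x + t^2 := by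
  have h1 : 0 < |Real.sin x| := abs_pos.mpr hx
  have h2 : |Real.sin x|^2 = Real.sin x ^ 2 := sq_abs _
  nlinarith [Real.sin_sq_add_cos_sq x, sq_nonneg (t + Real.cos x)]

lemma quad_pos' {t : ℝ} (ht : |t| < 1) (x : ℝ) : 0 < 1 + 2*t*Real.cos x + t^2 :=
  lt_of_lt_of_le (by nlinarith [abs_nonneg t] : (0:ℝ) < (1 - |t|)^2) (quad_lb t x)

lemma int_gneg1 : IntervalIntegrable (fun x => Real.log (2 - 2*Real.cos x)) volume 0 π := by
  have hπ := Real.pi_pos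
  have hlog2pi : Real.log 2 ≤ Real.log π := Real.log_le_log (by norm_num) Real.two_le_pi
  set C : ℝ := 2*(Real.log π - Real.log 2) with hC
  have hC0 : 0 ≤ C := by rw [hC]; linarith
  have hbound : IntervalIntegrable (fun x => 2*|Real.log x| + C) volume 0 π :=
    ((logII π hπ).abs.const_mul 2).add intervalIntegrable_const
  apply hbound.mono_fun'
  · exact ((Real.measurable_log.comp (by measurability)).aestronglyMeasurable)
  · rw [Filter.EventuallyLE, ae_restrict_iff' measurableSet_uIoc]
    refine Filter.Eventually.of_forall fun x hx => ?_
    rw [uIoc_of_le hπ.le] at hx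
    have hx0 : 0 < x := hx.1
    have hxπ : x ≤ π := hx.2
    -- bounds for 2 - 2 cos x
    have hub : 2 - 2*Real.cos x ≤ x^2 := by
      have := Real.one_sub_sq_div_two_le_cos (x := x); nlinarith
    have hlb : (2/π*x)^2 ≤ 2 - 2*Real.cos x := by
      have h := Real.cos_le_one_sub_mul_cos_sq (x := x) (by rw [abs_of_pos hx0]; exact hxπ)
      have hπ2 : (0:ℝ) < π^2 := by positivity
      have : (2/π*x)^2 = 4/π^2*x^2 := by field_simp; ring
      have e2 : 4/π^2*x^2 = 2*(2/π^2*x^2) := by ring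
      rw [this, e2]; linarith
    have hlbpos : 0 < (2/π*x)^2 := by positivity
    have hloglb : 2*(Real.log 2 - Real.log π) + 2*Real.log x ≤ Real.log (2 - 2*Real.cos x) := by
      have h := Real.log_le_log hlbpos hlb
      have e : Real.log ((2/π*x)^2) = 2*(Real.log 2 - Real.log π) + 2*Real.log x := by
        rw [Real.log_pow]
        rw [Real.log_mul (by positivity) (ne_of_gt hx0), Real.log_div (by norm_num) (ne_of_gt hπ)]
        push_cast; ring
      linarith [e ▸ h]
    have hlogub : Real.log (2 - 2*Real.cos x) ≤ 2*Real.log x := by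
      have h := Real.log_le_log (lt_of_lt_of_le hlbpos hlb) hub
      have e : Real.log (x^2) = 2*Real.log x := by rw [Real.log_pow]; push_cast; ring
      linarith [e ▸ h]
    have habs : |Real.log x| ≥ Real.log x := le_abs_self _
    have habs' : -|Real.log x| ≤ Real.log x := neg_abs_le _
    simp only [Real.norm_eq_abs]
    rw [abs_le]
    constructor <;> [skip; skip] <;> simp only [hC] <;> nlinarith

lemma int_g {t : ℝ} (ht : |t| ≤ 1) :
    IntervalIntegrable (fun x => Real.log (1 + 2*t*Real.cos x + t^2)) volume 0 π := by
  rcases lt_or_eq_of_le ht with h | h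
  · apply Continuous.intervalIntegrable
    exact (by continuity : Continuous fun x => 1 + 2*t*Real.cos x + t^2).log
      (fun x => ne_of_gt (quad_pos' h x))
  · rcases (abs_eq (by norm_num : (0:ℝ) ≤ 1)).mp h with h1 | h1
    · -- t = 1 : log (2 + 2 cos x), reflect int_gneg1
      subst h1
      have h2 := int_gneg1.comp_sub_left π
      simp only [sub_zero, sub_self] at h2
      have h2 := h2.symm
      have e : (fun x => Real.log (2 - 2*Real.cos (π - x)))
          = fun x => Real.log (1 + 2*1*Real.cos x + 1^2) := by
        funext x; rw [Real.cos_pi_sub]; ring_nf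
      rwa [e] at h2
    · subst h1
      have e : (fun x => Real.log (2 - 2*Real.cos x))
          = fun x => Real.log (1 + 2*(-1)*Real.cos x + (-1)^2) := by
        funext x; ring_nf
      rw [← e]; exact int_gneg1

noncomputable def J (t : ℝ) : ℝ := ∫ x in (0:ℝ)..π, Real.log (1 + 2*t*Real.cos x + t^2)

lemma J_neg (t : ℝ) : J (-t) = J t := by
  unfold J
  have e : (fun x => Real.log (1 + 2*(-t)*Real.cos x + (-t)^2))
      = fun x => (fun y => Real.log (1 + 2*t*Real.cos y + t^2)) (π - x) := by
    funext x; simp only [Real.cos_pi_sub]; ring_nf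
  calc (∫ x in (0:ℝ)..π, Real.log (1 + 2*(-t)*Real.cos x + (-t)^2))
      = ∫ x in (0:ℝ)..π, (fun y => Real.log (1 + 2*t*Real.cos y + t^2)) (π - x) := by rw [e]
    _ = ∫ x in (π - π)..(π - 0), Real.log (1 + 2*t*Real.cos x + t^2) :=
        intervalIntegral.integral_comp_sub_left (fun y => Real.log (1 + 2*t*Real.cos y + t^2)) π
    _ = ∫ x in (0:ℝ)..π, Real.log (1 + 2*t*Real.cos x + t^2) := by norm_num

lemma J_shift (s : ℝ) :
    (∫ x in π..(2*π), Real.log (1 + 2*s*Real.cos x + s^2)) = J (-s) := by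
  have e : (fun x => Real.log (1 + 2*(-s)*Real.cos x + (-s)^2))
      = fun x => (fun y => Real.log (1 + 2*s*Real.cos y + s^2)) (x + π) := by
    funext x; simp only [Real.cos_add_pi]; ring_nf
  unfold J
  rw [e, intervalIntegral.integral_comp_add_right (fun y => Real.log (1 + 2*s*Real.cos y + s^2)) π]
  norm_num [two_mul]

lemma doubling {t : ℝ} (ht : |t| ≤ 1) : J (t^2) = 2 * J t := by
  have htn : |(-t)| ≤ 1 := by rwa [abs_neg]
  have hts : |(-t^2)| ≤ 1 := by
    rw [abs_neg, abs_pow]; exact pow_le_one₀ (abs_nonneg t) ht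
  have key : 2 * J t = J t + J (-t) := by rw [J_neg]; ring
  rw [key]
  symm
  unfold J
  rw [← intervalIntegral.integral_add (int_g ht) (int_g htn)]
  have hae : ∀ᵐ x : ℝ, x ∉ ({π} : Set ℝ) :=
    compl_mem_ae_iff.mpr ((Set.finite_singleton π).measure_zero volume)
  have step1 : (∫ x in (0:ℝ)..π, (Real.log (1 + 2*t*Real.cos x + t^2)
        + Real.log (1 + 2*(-t)*Real.cos x + (-t)^2)))
      = ∫ x in (0:ℝ)..π, (fun y => Real.log (1 + 2*(-t^2)*Real.cos y + (-t^2)^2)) (2*x) := by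
    apply intervalIntegral.integral_congr_ae
    filter_upwards [hae] with x hx hxI
    rw [uIoc_of_le Real.pi_pos.le] at hxI
    have hxπ : x ≠ π := by simpa using hx
    have hsin : Real.sin x ≠ 0 :=
      ne_of_gt (Real.sin_pos_of_pos_of_lt_pi hxI.1 (lt_of_le_of_ne hxI.2 hxπ))
    have hu := quad_pos t x hsin
    have hv := quad_pos (-t) x hsin
    rw [← Real.log_mul (ne_of_gt hu) (ne_of_gt hv)]
    show _ = Real.log _
    congr 1
    rw [Real.cos_two_mul]
    ring
  rw [step1]
  rw [intervalIntegral.integral_comp_mul_left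
    (fun y => Real.log (1 + 2*(-t^2)*Real.cos y + (-t^2)^2)) (two_ne_zero)]
  have hint1 : IntervalIntegrable
      (fun y => Real.log (1 + 2*(-t^2)*Real.cos y + (-t^2)^2)) volume 0 π := int_g hts
  have hint2 : IntervalIntegrable
      (fun y => Real.log (1 + 2*(-t^2)*Real.cos y + (-t^2)^2)) volume π (2*π) := by
    have h2 := (hint1.comp_sub_left (2*π)).symm
    have e1 : 2*π - π = π := by ring
    have e2 : 2*π - 0 = 2*π := by ring
    rw [e1, e2] at h2
    have e : (fun x => (fun y => Real.log (1 + 2*(-t^2)*Real.cos y + (-t^2)^2)) (2*π - x))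
        = fun y => Real.log (1 + 2*(-t^2)*Real.cos y + (-t^2)^2) := by
      funext x
      simp only []
      rw [show Real.cos (2*π - x) = Real.cos x by
        rw [Real.cos_sub, Real.cos_two_pi, Real.sin_two_pi]; ring]
    rwa [e] at h2
  rw [show (2:ℝ) * 0 = 0 from by ring]
  rw [← intervalIntegral.integral_add_adjacent_intervals hint1 hint2]
  have e3 : (∫ x in π..(2*π), Real.log (1 + 2*(-t^2)*Real.cos x + (-t^2)^2)) = J (t^2) := by
    rw [J_shift (-t^2), neg_neg]
  have e4 : (∫ x in (0:ℝ)..π, Real.log (1 + 2*(-t^2)*Real.cos x + (-t^2)^2)) = J (t^2) :=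
    J_neg (t^2)
  rw [e4, e3]
  show 2⁻¹ • (J (t^2) + J (t^2)) = J (t^2)
  rw [smul_eq_mul]; ring

lemma J_bound {r : ℝ} (hr1 : r < 1) {s : ℝ} (hs : |s| ≤ r) :
    |J s| ≤ (Real.log 4 - 2*Real.log (1-r)) * π := by
  have hr0 : 0 ≤ r := le_trans (abs_nonneg s) hs
  have hb : ∀ x ∈ Set.uIoc (0:ℝ) π, ‖Real.log (1 + 2*s*Real.cos x + s^2)‖
      ≤ Real.log 4 - 2*Real.log (1-r) := by
    intro x _
    have h1 : (1-r)^2 ≤ 1 + 2*s*Real.cos x + s^2 := by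
      have := quad_lb s x
      nlinarith [abs_nonneg s]
    have h1' : (0:ℝ) < (1-r)^2 := by nlinarith
    have h2 : 1 + 2*s*Real.cos x + s^2 ≤ 4 := by
      have := quad_ub s x
      nlinarith [abs_nonneg s]
    have hub := Real.log_le_log (lt_of_lt_of_le h1' h1) h2
    have hlb := Real.log_le_log h1' h1
    rw [Real.log_pow] at hlb
    have hlog4 : 0 ≤ Real.log 4 := Real.log_nonneg (by norm_num)
    have hlogr : Real.log (1-r) ≤ 0 := Real.log_nonpos (by linarith) (by linarith)
    rw [Real.norm_eq_abs, abs_le]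
    push_cast at hlb
    constructor <;> nlinarith
  have h := intervalIntegral.norm_integral_le_of_norm_le_const hb
  simpa [J, abs_of_nonneg Real.pi_pos.le] using h

lemma J_zero_of_lt {t : ℝ} (ht : |t| < 1) : J t = 0 := by
  have iter : ∀ n : ℕ, 2^n * J t = J (t ^ (2^n)) := by
    intro n; induction n with
    | zero => simp
    | succ n ih =>
      have h1 : |t ^ (2^n)| ≤ 1 := by rw [abs_pow]; exact pow_le_one₀ (abs_nonneg t) ht.le
      have h2 := doubling h1
      calc (2:ℝ)^(n+1) * J t = 2 * (2^n * J t) := by ring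
        _ = 2 * J (t^(2^n)) := by rw [ih]
        _ = J ((t^(2^n))^2) := by rw [← h2]
        _ = J (t^(2^(n+1))) := by rw [← pow_mul, ← pow_succ]
  set C := (Real.log 4 - 2*Real.log (1-|t|)) * π with hCdef
  have hb : ∀ n : ℕ, |J t| ≤ C * (1/2)^n := by
    intro n
    have h1 : |t ^ (2^n)| ≤ |t| := by
      rw [abs_pow]
      have hne : 2^n ≠ 0 := Nat.pos_iff_ne_zero.mp (by positivity)
      exact pow_le_of_le_one (abs_nonneg t) ht.le hne
    have h2 := J_bound ht h1
    have h3 : |J t| = |J (t ^ (2^n))| * (1/2)^n := by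
      rw [← iter n, abs_mul, abs_of_pos (by positivity : (0:ℝ) < (2:ℝ)^n)]
      field_simp
      rw [mul_assoc, ← mul_pow]; norm_num
    rw [h3]
    have : (0:ℝ) < (1/2:ℝ)^n := by positivity
    exact mul_le_mul_of_nonneg_right h2 this.le
  have hlim : Filter.Tendsto (fun n : ℕ => C * (1/2)^n) Filter.atTop (nhds 0) := by
    have h0 := tendsto_pow_atTop_nhds_zero_of_lt_one (by norm_num : (0:ℝ) ≤ 1/2)
      (by norm_num : (1/2:ℝ) < 1)
    simpa using h0.const_mul C
  have : |J t| ≤ 0 := ge_of_tendsto' hlim hb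
  exact abs_eq_zero.mp (le_antisymm this (abs_nonneg _))

lemma J_zero {t : ℝ} (ht : |t| ≤ 1) : J t = 0 := by
  rcases lt_or_eq_of_le ht with h | h
  · exact J_zero_of_lt h
  · have h2 := doubling ht
    have hsq : t^2 = 1 := by rw [← sq_abs, h]; norm_num
    rw [hsq] at h2
    rcases (abs_eq (by norm_num : (0:ℝ) ≤ 1)).mp h with h1 | h1 <;> subst h1
    · linarith
    · have h3 : J (-1 : ℝ) = J 1 := J_neg 1
      rw [← h3] at h2
      linarith

/-- For `a ≥ |b| > 0`, `∫₀^π log(a + b cos x) dx = π log((a + √(a² - b²))/2)`. -/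
theorem integral_log_add_cos (a b : ℝ) (hb : 0 < |b|) (hab : |b| ≤ a) :
    (∫ x in (0:ℝ)..π, Real.log (a + b * Real.cos x)) =
      π * Real.log ((a + Real.sqrt (a ^ 2 - b ^ 2)) / 2) := by
  have ha : 0 < a := lt_of_lt_of_le hb hab
  have hsq : b^2 ≤ a^2 := by
    have := pow_le_pow_left₀ (abs_nonneg b) hab 2
    rwa [sq_abs] at this
  set s := Real.sqrt (a^2 - b^2) with hs
  have hs0 : 0 ≤ s := Real.sqrt_nonneg _
  have hs2 : s^2 = a^2 - b^2 := Real.sq_sqrt (by linarith)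
  set c := (a + s)/2 with hc
  have hc0 : 0 < c := by rw [hc]; positivity
  set t := b/(2*c) with htdef
  have h2c : 2*c = a + s := by rw [hc]; ring
  have h1 : (a+s)^2 - 2*a*(a+s) + b^2 = 0 := by linear_combination hs2
  have hac : 4*c*a = 4*c^2 + b^2 := by rw [hc]; linear_combination -h1
  have hkey : ∀ x : ℝ, a + b * Real.cos x = c * (1 + 2*t*Real.cos x + t^2) := by
    intro x
    have e1 : c*(1 + 2*t*Real.cos x + t^2) = c + b*Real.cos x + b^2/(4*c) := by
      rw [htdef]; field_simp; ring
    have e2 : c + b^2/(4*c) = a := by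
      field_simp
      linarith [hs2]
    rw [e1]; linarith
  have ht1 : |t| ≤ 1 := by
    rw [htdef, abs_div, abs_of_pos (by linarith : (0:ℝ) < 2*c), div_le_one (by linarith)]
    rw [h2c]; linarith
  have hae : ∀ᵐ x : ℝ, x ∉ ({π} : Set ℝ) :=
    compl_mem_ae_iff.mpr ((Set.finite_singleton π).measure_zero volume)
  have step : (∫ x in (0:ℝ)..π, Real.log (a + b * Real.cos x))
      = ∫ x in (0:ℝ)..π, (Real.log c + Real.log (1 + 2*t*Real.cos x + t^2)) := by
    apply intervalIntegral.integral_congr_ae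
    filter_upwards [hae] with x hx hxI
    rw [uIoc_of_le Real.pi_pos.le] at hxI
    have hxπ : x ≠ π := by simpa using hx
    have hsin : Real.sin x ≠ 0 :=
      ne_of_gt (Real.sin_pos_of_pos_of_lt_pi hxI.1 (lt_of_le_of_ne hxI.2 hxπ))
    rw [hkey x, Real.log_mul (ne_of_gt hc0) (ne_of_gt (quad_pos t x hsin))]
  rw [step, intervalIntegral.integral_add intervalIntegrable_const (int_g ht1),
    intervalIntegral.integral_const]
  have e3 : (∫ x in (0:ℝ)..π, Real.log (1 + 2*t*Real.cos x + t^2)) = 0 := J_zero ht1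
  rw [e3]
  simp [smul_eq_mul]
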